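/- arXiv:0711.4376 — 9 statements merged into one kernel-verified Lean document; each statement's English description precedes it below -/
import Mathlib

section
/- If f : V → A is independent of J, V = V₁ ∪_K V₂ is a K-saturated disjoint cover, and n ∈ K, then V(n:f) = V₁(n:f) ∪_K V₂(n:f) is a K-saturated disjoint cover, where V(n:f) = { ⃗a with the n-th coordinate replaced by f(⃗a) : ⃗a ∈ V }. -/
/-- Two valuations agree outside `J`: they take the same values on all coordinates not in `J`. -/
def AgreeOutside {ι A : Type*} (J : Set ι) (a b : ι → A) : Prop :=
  ∀ i, i ∉ J → a i = b i

/-- `𝒰` is a `J`-saturated disjoint cover of `V`. -/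
def IsSatDisjCover {ι A : Type*} (J : Set ι) (V : Set (ι → A))
    (𝒰 : Set (Set (ι → A))) : Prop :=
  ⋃₀ 𝒰 = V ∧ 𝒰.Pairwise Disjoint ∧
    ∀ a ∈ V, ∀ b ∈ V, AgreeOutside J a b → ∀ U ∈ 𝒰, a ∈ U → b ∈ U

/-- `V = V₁ ∪_J V₂`: a `J`-saturated disjoint (binary) cover of `V`. -/
def UnionJ {ι A : Type*} (J : Set ι) (V V₁ V₂ : Set (ι → A)) : Prop :=
  V₁ ∪ V₂ = V ∧ Disjoint V₁ V₂ ∧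
    ∀ a ∈ V, ∀ b ∈ V, AgreeOutside J a b →
      ((a ∈ V₁ → b ∈ V₁) ∧ (a ∈ V₂ → b ∈ V₂))

/-- `f : V → A` is independent of `J`. -/
def IndepOf {ι A : Type*} (J : Set ι) (V : Set (ι → A)) (f : (ι → A) → A) : Prop :=
  ∀ a ∈ V, ∀ b ∈ V, AgreeOutside J a b → f a = f b

/-- `V(n:f) = { ⃗a(n : f ⃗a) : ⃗a ∈ V }`. -/
def teamUpd {ι A : Type*} [DecidableEq ι] (n : ι) (f : (ι → A) → A)
    (V : Set (ι → A)) : Set (ι → A) :=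
  (fun a => Function.update a n (f a)) '' V

/-- `V(n:A) = { ⃗a(n : c) : ⃗a ∈ V, c ∈ A }`. -/
def teamExp {ι A : Type*} [DecidableEq ι] (n : ι) (V : Set (ι → A)) : Set (ι → A) :=
  {x | ∃ a ∈ V, ∃ c : A, x = Function.update a n c}

/-- If `f : V → A` is independent of `J`, `V = V₁ ∪_K V₂`, and `n ∈ K`, then
`V(n:f) = V₁(n:f) ∪_K V₂(n:f)`. -/
theorem unionJ_teamUpd {ι A : Type*} [DecidableEq ι] (J K : Set ι) (n : ι) (hn : n ∈ K)
    (V V₁ V₂ : Set (ι → A)) (f : (ι → A) → A) (hf : IndepOf J V f)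
    (hcov : UnionJ K V V₁ V₂) :
    UnionJ K (teamUpd n f V) (teamUpd n f V₁) (teamUpd n f V₂) := by
  obtain ⟨hUn, hDisj, hSat⟩ := hcov
  have hsub1 : V₁ ⊆ V := hUn ▸ Set.subset_union_left
  have hsub2 : V₂ ⊆ V := hUn ▸ Set.subset_union_right
  -- key: if updates agree outside K then originals agree outside K
  have key : ∀ a b : ι → A, AgreeOutside K (Function.update a n (f a))
      (Function.update b n (f b)) → AgreeOutside K a b := by
    intro a b h i hi
    have hne : i ≠ n := fun h' => hi (h' ▸ hn)
    have := h i hi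
    simpa [Function.update_of_ne hne] using this
  refine ⟨?_, ?_, ?_⟩
  · rw [← hUn]; exact (Set.image_union _ _ _).symm
  · rw [Set.disjoint_left]
    rintro x ⟨a, ha, rfl⟩ ⟨b, hb, hx⟩
    have hK : AgreeOutside K a b :=
      key a b (fun i hi => by have := congrFun hx i; simpa using this.symm)
    have := (hSat a (hsub1 ha) b (hsub2 hb) hK).1 ha
    exact Set.disjoint_left.mp hDisj this hb
  · rintro x ⟨a, ha, rfl⟩ y ⟨b, hb, rfl⟩ hxy
    have hK : AgreeOutside K a b := key a b hxy
    constructor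
    · rintro ⟨a', ha', heq⟩
      have hK' : AgreeOutside K a' b := by
        intro i hi
        have hne : i ≠ n := fun h' => hi (h' ▸ hn)
        have := congrFun heq i
        simp only [Function.update_of_ne hne] at this
        exact this.trans (hK i hi)
      exact ⟨b, (hSat a' (hsub1 ha') b hb hK').1 ha', rfl⟩
    · rintro ⟨a', ha', heq⟩
      have hK' : AgreeOutside K a' b := by
        intro i hi
        have hne : i ≠ n := fun h' => hi (h' ▸ hn)
        have := congrFun heq i
        simp only [Function.update_of_ne hne] at this
        exact this.trans (hK i hi)
      exact ⟨b, (hSat a' (hsub2 ha') b hb hK').2 ha', rfl⟩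
end

section
/- If f : V → A is independent of J and g : V(n:f) → A is independent of K, then there is a function h : V → A independent of J ∩ K such that V(n:f)(n:g) = V(n:h); moreover, if n ∈ K then h is independent of K. -/
open Function

section

variable {ι A : Type*}

theorem AgreeOutside.mono {J J' : Set ι} {a b : ι → A} (h : AgreeOutside J a b) (hJ : J ⊆ J') :
    AgreeOutside J' a b :=
  fun i hi => h i (fun hiJ => hi (hJ hiJ))

theorem AgreeOutside.update_update [DecidableEq ι] {J : Set ι} {a b : ι → A} {n : ι} {x y : A}
    (h : AgreeOutside J a b) (hxy : n ∉ J → x = y) :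
    AgreeOutside J (update a n x) (update b n y) := by
  intro i hi
  rcases eq_or_ne i n with rfl | hin
  · simp only [update_self, hxy hi]
  · simp only [update_of_ne hin, h i hi]

variable [DecidableEq ι] {J K : Set ι} {n : ι} {V : Set (ι → A)} {f g : (ι → A) → A}

theorem teamUpd_teamUpd :
    teamUpd n g (teamUpd n f V) = teamUpd n (fun a => g (update a n (f a))) V := by
  simp only [teamUpd, Set.image_image, update_idem]

theorem IndepOf.comp_update_inter (hf : IndepOf J V f) (hg : IndepOf K (teamUpd n f V) g) :
    IndepOf (J ∩ K) V (fun a => g (update a n (f a))) := by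
  intro a ha b hb hab
  have hfab : f a = f b := hf a ha b hb (hab.mono Set.inter_subset_left)
  exact hg _ (Set.mem_image_of_mem _ ha) _ (Set.mem_image_of_mem _ hb)
    ((hab.mono Set.inter_subset_right).update_update fun _ => hfab)

theorem IndepOf.comp_update_of_mem (hn : n ∈ K) (hg : IndepOf K (teamUpd n f V) g) :
    IndepOf K V (fun a => g (update a n (f a))) :=
  fun _ ha _ hb hab => hg _ (Set.mem_image_of_mem _ ha) _ (Set.mem_image_of_mem _ hb)
    (hab.update_update fun hn' => absurd hn hn')

end

/-- Composition of variations: if `f : V → A` is independent of `J` and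
`g : V(n:f) → A` is independent of `K`, there is `h : V → A` independent of `J ∩ K`
with `V(n:f)(n:g) = V(n:h)`; moreover if `n ∈ K` then `h` is independent of `K`. -/
theorem exists_comp_indep {ι A : Type*} [DecidableEq ι] (J K : Set ι) (n : ι)
    (V : Set (ι → A)) (f g : (ι → A) → A)
    (hf : IndepOf J V f) (hg : IndepOf K (teamUpd n f V) g) :
    ∃ h : (ι → A) → A, IndepOf (J ∩ K) V h ∧
      teamUpd n g (teamUpd n f V) = teamUpd n h V ∧
      (n ∈ K → IndepOf K V h) :=
  ⟨fun a => g (update a n (f a)), hf.comp_update_inter hg, teamUpd_teamUpd,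
    fun hn => hg.comp_update_of_mem hn⟩
end

section
/- Given f : V → A independent of J and h : V → A independent of K, with n ∈ K, there exists g : V(n:f) → A independent of K such that V(n:f)(n:g) = V(n:h). -/
theorem AgreeOutside.symm {ι A : Type*} {K : Set ι} {a b : ι → A} (hab : AgreeOutside K a b) :
    AgreeOutside K b a :=
  fun i hi => (hab i hi).symm

theorem AgreeOutside.trans {ι A : Type*} {K : Set ι} {a b c : ι → A}
    (hab : AgreeOutside K a b) (hbc : AgreeOutside K b c) : AgreeOutside K a c :=
  fun i hi => (hab i hi).trans (hbc i hi)

theorem agreeOutside_update_self {ι A : Type*} [DecidableEq ι] {K : Set ι} {n : ι} (hn : n ∈ K)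
    (a : ι → A) (c : A) : AgreeOutside K (Function.update a n c) a :=
  fun _ hi => Function.update_of_ne (by rintro rfl; exact hi hn) _ _

/-- `g` is well defined up to `h`-values since all `φ`-preimages of a point agree outside `K`. -/
theorem IndepOf.exists_indepOf_image {ι A : Type*} {K : Set ι} {V : Set (ι → A)}
    {h : (ι → A) → A} (hh : IndepOf K V h) (φ : (ι → A) → ι → A)
    (hφ : ∀ a ∈ V, AgreeOutside K (φ a) a) :
    ∃ g : (ι → A) → A, IndepOf K (φ '' V) g ∧ ∀ a ∈ V, g (φ a) = h a := by
  classical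
  let g : (ι → A) → A := fun x => if hx : x ∈ φ '' V then h hx.choose else h x
  have hg : ∀ a ∈ V, g (φ a) = h a := by
    intro a ha
    have hx : φ a ∈ φ '' V := ⟨a, ha, rfl⟩
    obtain ⟨ha', hφa'⟩ := hx.choose_spec
    rw [show g (φ a) = h hx.choose from dif_pos hx]
    exact hh _ ha' _ ha ((hφ _ ha').symm.trans (hφa'.symm ▸ hφ a ha))
  refine ⟨g, ?_, hg⟩
  rintro _ ⟨a, ha, rfl⟩ _ ⟨b, hb, rfl⟩ hab
  rw [hg a ha, hg b hb]
  exact hh a ha b hb (((hφ a ha).symm.trans hab).trans (hφ b hb))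

theorem teamUpd_teamUpd_of_forall_eq {ι A : Type*} [DecidableEq ι] {n : ι}
    {V : Set (ι → A)} {f g h : (ι → A) → A}
    (hgfh : ∀ a ∈ V, g (Function.update a n (f a)) = h a) :
    teamUpd n g (teamUpd n f V) = teamUpd n h V := by
  rw [teamUpd, teamUpd, teamUpd, Set.image_image]
  refine Set.image_congr fun a ha => ?_
  rw [Function.update_idem, hgfh a ha]

theorem exists_interp_indep_general {ι A : Type*} [DecidableEq ι] (K : Set ι) (n : ι)
    (hn : n ∈ K) (V : Set (ι → A)) (f h : (ι → A) → A)
    (hh : IndepOf K V h) :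
    ∃ g : (ι → A) → A, IndepOf K (teamUpd n f V) g ∧
      teamUpd n g (teamUpd n f V) = teamUpd n h V := by
  obtain ⟨g, hg_indep, hg_comp⟩ :=
    hh.exists_indepOf_image (fun a => Function.update a n (f a))
      fun a _ => agreeOutside_update_self hn a (f a)
  exact ⟨g, hg_indep, teamUpd_teamUpd_of_forall_eq hg_comp⟩

/-- Interpolation: given `f : V → A` independent of `J` and `h : V → A` independent of `K`,
with `n ∈ K`, there is `g : V(n:f) → A` independent of `K` with `V(n:f)(n:g) = V(n:h)`. -/
theorem exists_interp_indep {ι A : Type*} [DecidableEq ι] (J K : Set ι) (n : ι)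
    (hn : n ∈ K) (V : Set (ι → A)) (f h : (ι → A) → A)
    (hf : IndepOf J V f) (hh : IndepOf K V h) :
    ∃ g : (ι → A) → A, IndepOf K (teamUpd n f V) g ∧
      teamUpd n g (teamUpd n f V) = teamUpd n h V :=
  exists_interp_indep_general K n hn V f h hh
end

section
/- For every IFG formula φ, suitable structure 𝔄, and team V, it is not the case that V is both a winning team and a losing team for φ unless V is empty: if V is nonempty then not (𝔄 ⊨⁺ φ[V] and 𝔄 ⊨⁻ φ[V]). -/
/-- IFG formulas over an abstract supply of atomic formulas (given as predicates on
valuations), built by negation `∼`, slashed disjunction `∨_J`, and slashed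
existential quantification `∃ v_n / J`. -/
inductive IFG (ι A : Type*) where
  | atom : ((ι → A) → Prop) → IFG ι A
  | not : IFG ι A → IFG ι A
  | or : Set ι → IFG ι A → IFG ι A → IFG ι A
  | ex : ι → Set ι → IFG ι A → IFG ι A

/-- Trump semantics: `Sat φ true V` means `𝔄 ⊨⁺ φ[V]` and `Sat φ false V` means
`𝔄 ⊨⁻ φ[V]`. -/
def Sat {ι A : Type*} [DecidableEq ι] : IFG ι A → Bool → Set (ι → A) → Prop
  | .atom P, true, V => ∀ a ∈ V, P a
  | .atom P, false, V => ∀ a ∈ V, ¬ P a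
  | .not ψ, b, V => Sat ψ (!b) V
  | .or J ψ₁ ψ₂, true, V =>
      ∃ V₁ V₂, UnionJ J V V₁ V₂ ∧ Sat ψ₁ true V₁ ∧ Sat ψ₂ true V₂
  | .or J ψ₁ ψ₂, false, V => Sat ψ₁ false V ∧ Sat ψ₂ false V
  | .ex n J ψ, true, V => ∃ f, IndepOf J V f ∧ Sat ψ true (teamUpd n f V)
  | .ex n J ψ, false, V => Sat ψ false (teamExp n V)

/- Induction on `φ`, using that satisfaction is downward closed in the team. For `ψ₁ ∨_J ψ₂`
a point of `V` lies in some cover part `Vᵢ ⊆ V`, which inherits `⊨⁻ ψᵢ` from `V`; for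
`∃ v_n/J ψ` the team `V(n:f)` is nonempty and contained in `V(n:A)`, so it inherits `⊨⁻ ψ`. -/

theorem UnionJ.inter {ι A : Type*} {J : Set ι} {V V₁ V₂ W : Set (ι → A)}
    (h : UnionJ J V V₁ V₂) (hWV : W ⊆ V) : UnionJ J W (V₁ ∩ W) (V₂ ∩ W) := by
  obtain ⟨hcov, hdis, hsat⟩ := h
  refine ⟨?_, hdis.mono Set.inter_subset_left Set.inter_subset_left, ?_⟩
  · rw [← Set.union_inter_distrib_right, hcov, Set.inter_eq_right.2 hWV]
  · intro a ha b hb hab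
    have hsat_ab := hsat a (hWV ha) b (hWV hb) hab
    exact ⟨fun h₁ => ⟨hsat_ab.1 h₁.1, hb⟩, fun h₂ => ⟨hsat_ab.2 h₂.1, hb⟩⟩

theorem IndepOf.mono {ι A : Type*} {J : Set ι} {V W : Set (ι → A)} {f : (ι → A) → A}
    (h : IndepOf J V f) (hWV : W ⊆ V) : IndepOf J W f :=
  fun a ha b hb hab => h a (hWV ha) b (hWV hb) hab

theorem teamUpd_mono {ι A : Type*} [DecidableEq ι] (n : ι) (f : (ι → A) → A)
    {V W : Set (ι → A)} (hWV : W ⊆ V) : teamUpd n f W ⊆ teamUpd n f V :=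
  Set.image_mono hWV

theorem teamExp_mono {ι A : Type*} [DecidableEq ι] (n : ι) {V W : Set (ι → A)}
    (hWV : W ⊆ V) : teamExp n W ⊆ teamExp n V := by
  rintro x ⟨a, ha, c, rfl⟩
  exact ⟨a, hWV ha, c, rfl⟩

theorem teamUpd_subset_teamExp {ι A : Type*} [DecidableEq ι] (n : ι) (f : (ι → A) → A)
    (V : Set (ι → A)) : teamUpd n f V ⊆ teamExp n V := by
  rintro x ⟨a, ha, rfl⟩
  exact ⟨a, ha, f a, rfl⟩

theorem Sat.subset {ι A : Type*} [DecidableEq ι] {φ : IFG ι A} {b : Bool}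
    {V W : Set (ι → A)} (h : Sat φ b V) (hWV : W ⊆ V) : Sat φ b W := by
  induction φ generalizing b V W with
  | atom P => cases b <;> exact fun a ha => h a (hWV ha)
  | not ψ ih => exact ih h hWV
  | or J ψ₁ ψ₂ ih₁ ih₂ =>
    cases b with
    | false => exact ⟨ih₁ h.1 hWV, ih₂ h.2 hWV⟩
    | true =>
      obtain ⟨V₁, V₂, hcov, h₁, h₂⟩ := h
      exact ⟨V₁ ∩ W, V₂ ∩ W, hcov.inter hWV, ih₁ h₁ Set.inter_subset_left,
        ih₂ h₂ Set.inter_subset_left⟩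
  | ex n J ψ ih =>
    cases b with
    | true =>
      obtain ⟨f, hf, hψ⟩ := h
      exact ⟨f, hf.mono hWV, ih hψ (teamUpd_mono n f hWV)⟩
    | false => exact ih h (teamExp_mono n hWV)

/-- Noncontradiction: a nonempty team cannot be both winning and losing for `φ`. -/
theorem not_sat_pos_and_neg {ι A : Type*} [DecidableEq ι] (φ : IFG ι A)
    (V : Set (ι → A)) (hV : V.Nonempty) :
    ¬ (Sat φ true V ∧ Sat φ false V) := by
  induction φ generalizing V with
  | atom P =>
    rintro ⟨hpos, hneg⟩
    obtain ⟨a, ha⟩ := hV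
    exact hneg a ha (hpos a ha)
  | not ψ ih => exact fun ⟨hpos, hneg⟩ => ih V hV ⟨hneg, hpos⟩
  | or J ψ₁ ψ₂ ih₁ ih₂ =>
    rintro ⟨⟨V₁, V₂, ⟨hcov, -, -⟩, hpos₁, hpos₂⟩, hneg₁, hneg₂⟩
    obtain ⟨a, ha⟩ := hV
    rw [← hcov] at hneg₁ hneg₂ ha
    rcases ha with ha | ha
    · exact ih₁ V₁ ⟨a, ha⟩ ⟨hpos₁, hneg₁.subset Set.subset_union_left⟩
    · exact ih₂ V₂ ⟨a, ha⟩ ⟨hpos₂, hneg₂.subset Set.subset_union_right⟩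
  | ex n J ψ ih =>
    rintro ⟨⟨f, -, hpos⟩, hneg⟩
    exact ih _ (hV.image _) ⟨hpos, Sat.subset (φ := ψ) hneg (teamUpd_subset_teamExp n f V)⟩
end

section
/- The operation +_J on IFG algebra elements is associative: (X +_J Y) +_J Z = X +_J (Y +_J Z). -/
/-- An element of an IFG cylindric power set algebra: a pair `⟨X⁺, X⁻⟩` of sets of teams. -/
abbrev IFGElem (ι A : Type*) := Set (Set (ι → A)) × Set (Set (ι → A))

/-- Negation: `∼⟨X⁺, X⁻⟩ = ⟨X⁻, X⁺⟩`. -/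
def ifgNeg {ι A : Type*} (X : IFGElem ι A) : IFGElem ι A := (X.2, X.1)

/-- `{V : V = V₁ ∪_J V₂ for some V₁ ∈ S, V₂ ∈ T}`. -/
def plusPos {ι A : Type*} (J : Set ι) (S T : Set (Set (ι → A))) : Set (Set (ι → A)) :=
  {V | ∃ V₁ ∈ S, ∃ V₂ ∈ T, UnionJ J V V₁ V₂}

/-- The operation `X +_J Y`. -/
def ifgPlus {ι A : Type*} (J : Set ι) (X Y : IFGElem ι A) : IFGElem ι A :=
  (plusPos J X.1 Y.1, X.2 ∩ Y.2)

/-- The operation `X ·_J Y`. -/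
def ifgTimes {ι A : Type*} (J : Set ι) (X Y : IFGElem ι A) : IFGElem ι A :=
  (X.1 ∩ Y.1, plusPos J X.2 Y.2)

/-- The cylindrification `C_{n,J}(X)`. -/
def ifgCyl {ι A : Type*} [DecidableEq ι] (n : ι) (J : Set ι) (X : IFGElem ι A) :
    IFGElem ι A :=
  ({V | ∃ f, IndepOf J V f ∧ teamUpd n f V ∈ X.1}, {W | teamExp n W ∈ X.2})

/-- The constant `0`. -/
def ifgZero {ι A : Type*} : IFGElem ι A := ({∅}, Set.univ)

/-- The constant `1`. -/
def ifgOne {ι A : Type*} : IFGElem ι A := (Set.univ, {∅})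

/-- The diagonal element `D_{ij}`. -/
def ifgD {ι A : Type*} (i j : ι) : IFGElem ι A :=
  ({V | ∀ a ∈ V, a i = a j}, {V | ∀ a ∈ V, a i ≠ a j})

lemma unionJ_comm {ι A : Type*} {J : Set ι} {V V₁ V₂ : Set (ι → A)}
    (h : UnionJ J V V₁ V₂) : UnionJ J V V₂ V₁ := by
  obtain ⟨hu, hd, hs⟩ := h
  exact ⟨by rw [Set.union_comm]; exact hu, hd.symm,
    fun a ha b hb hab => ⟨(hs a ha b hb hab).2, (hs a ha b hb hab).1⟩⟩

lemma unionJ_assoc_key {ι A : Type*} {J : Set ι} {V V₁ V₂ W₁ W₂ : Set (ι → A)}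
    (h : UnionJ J V V₁ V₂) (h1 : UnionJ J V₁ W₁ W₂) :
    UnionJ J V W₁ (W₂ ∪ V₂) ∧ UnionJ J (W₂ ∪ V₂) W₂ V₂ := by
  obtain ⟨hu, hd, hs⟩ := h
  obtain ⟨hu1, hd1, hs1⟩ := h1
  have hW1 : W₁ ⊆ V₁ := hu1 ▸ Set.subset_union_left
  have hW2 : W₂ ⊆ V₁ := hu1 ▸ Set.subset_union_right
  have hV1 : V₁ ⊆ V := hu ▸ Set.subset_union_left
  have hV2 : V₂ ⊆ V := hu ▸ Set.subset_union_right
  constructor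
  · refine ⟨?_, ?_, ?_⟩
    · rw [← Set.union_assoc, hu1, hu]
    · refine Set.disjoint_union_right.2 ⟨hd1, hd.mono_left hW1⟩
    · intro a ha b hb hab
      constructor
      · intro haW1
        have hbV1 : b ∈ V₁ := (hs a ha b hb hab).1 (hW1 haW1)
        exact (hs1 a (hW1 haW1) b hbV1 hab).1 haW1
      · rintro (haW2 | haV2)
        · have hbV1 : b ∈ V₁ := (hs a ha b hb hab).1 (hW2 haW2)
          exact Or.inl ((hs1 a (hW2 haW2) b hbV1 hab).2 haW2)
        · exact Or.inr ((hs a ha b hb hab).2 haV2)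
  · refine ⟨rfl, hd.mono_left hW2, ?_⟩
    intro a ha b hb hab
    have ha' : a ∈ V := ha.elim (fun h => hV1 (hW2 h)) (fun h => hV2 h)
    have hb' : b ∈ V := hb.elim (fun h => hV1 (hW2 h)) (fun h => hV2 h)
    constructor
    · intro haW2
      have hbV1 : b ∈ V₁ := (hs a ha' b hb' hab).1 (hW2 haW2)
      exact (hs1 a (hW2 haW2) b hbV1 hab).2 haW2
    · exact (hs a ha' b hb' hab).2

lemma plusPos_assoc {ι A : Type*} (J : Set ι) (S T U : Set (Set (ι → A))) :
    plusPos J (plusPos J S T) U = plusPos J S (plusPos J T U) := by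
  ext V
  constructor
  · rintro ⟨V₁, ⟨W₁, hW₁, W₂, hW₂, h1⟩, V₂, hV₂, h⟩
    obtain ⟨hk1, hk2⟩ := unionJ_assoc_key h h1
    exact ⟨W₁, hW₁, W₂ ∪ V₂, ⟨W₂, hW₂, V₂, hV₂, hk2⟩, hk1⟩
  · rintro ⟨V₁, hV₁, V₂, ⟨W₁, hW₁, W₂, hW₂, h1⟩, h⟩
    obtain ⟨hk1, hk2⟩ := unionJ_assoc_key (unionJ_comm h) (unionJ_comm h1)
    exact ⟨W₁ ∪ V₁, ⟨V₁, hV₁, W₁, hW₁, unionJ_comm hk2⟩, W₂, hW₂, unionJ_comm hk1⟩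

/-- Associativity of `+_J`. -/
theorem ifgPlus_assoc {ι A : Type*} (J : Set ι) (X Y Z : IFGElem ι A) :
    ifgPlus J (ifgPlus J X Y) Z = ifgPlus J X (ifgPlus J Y Z) := by
  unfold ifgPlus
  simp [plusPos_assoc, Set.inter_assoc]
end

section
/- In an IFG power set algebra, if X and Y are rooted elements (meaning ∅ ∈ X⁺ ∩ X⁻ and ∅ ∈ Y⁺ ∩ Y⁻), then the absorption laws hold for the N-indexed operations: X +_N (X ·_J Y) = X and X ·_N (X +_J Y) = X, for any J ⊆ N. -/
/-- An element is rooted if both coordinates contain the empty team. -/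
def IsRooted {ι A : Type*} (X : IFGElem ι A) : Prop := ∅ ∈ X.1 ∧ ∅ ∈ X.2

lemma agreeOutside_univ {ι A : Type*} (a b : ι → A) : AgreeOutside Set.univ a b :=
  fun i hi => absurd (Set.mem_univ i) hi

lemma unionJ_empty_right {ι A : Type*} (J : Set ι) (V : Set (ι → A)) : UnionJ J V V ∅ :=
  ⟨Set.union_empty V, Set.disjoint_empty V, fun _ _ _ hb _ => ⟨fun _ => hb, False.elim⟩⟩

/-- Since every two valuations agree outside the full index set, a saturated cell is all or nothing. -/
lemma UnionJ.eq_of_univ {ι A : Type*} {V V₁ V₂ : Set (ι → A)}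
    (h : UnionJ Set.univ V V₁ V₂) : V₁ = V ∨ V₂ = V := by
  obtain ⟨hunion, -, hsat⟩ := h
  rcases V₂.eq_empty_or_nonempty with hV₂ | ⟨a, ha⟩
  · left
    rw [← hunion, hV₂, Set.union_empty]
  · right
    have haV : a ∈ V := hunion ▸ Or.inr ha
    refine (hunion ▸ Set.subset_union_right).antisymm fun b hb => ?_
    exact (hsat a haV b hb (agreeOutside_univ a b)).2 ha

lemma subset_plusPos_left {ι A : Type*} (J : Set ι) {S T : Set (Set (ι → A))} (hT : ∅ ∈ T) :
    S ⊆ plusPos J S T :=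
  fun V hV => ⟨V, hV, ∅, hT, unionJ_empty_right J V⟩

lemma plusPos_univ_subset {ι A : Type*} (S T : Set (Set (ι → A))) :
    plusPos Set.univ S T ⊆ S ∪ T := by
  rintro V ⟨V₁, hV₁, V₂, hV₂, h⟩
  rcases h.eq_of_univ with rfl | rfl
  exacts [Or.inl hV₁, Or.inr hV₂]

lemma plusPos_univ_eq_left {ι A : Type*} {S T : Set (Set (ι → A))} (hT : ∅ ∈ T)
    (hTS : T ⊆ S) : plusPos Set.univ S T = S :=
  ((plusPos_univ_subset S T).trans (Set.union_subset le_rfl hTS)).antisymm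
    (subset_plusPos_left _ hT)

/-- Absorption for the `N`-indexed operations on rooted elements:
`X +_N (X ·_J Y) = X` and `X ·_N (X +_J Y) = X`, where `N` is the full index set. -/
theorem absorption_rooted {ι A : Type*} (J : Set ι) (X Y : IFGElem ι A)
    (hX : IsRooted X) (hY : IsRooted Y) :
    ifgPlus (Set.univ : Set ι) X (ifgTimes J X Y) = X ∧
    ifgTimes (Set.univ : Set ι) X (ifgPlus J X Y) = X := by
  obtain ⟨hX₁, hX₂⟩ := hX
  obtain ⟨hY₁, hY₂⟩ := hY
  refine ⟨Prod.ext ?_ ?_, Prod.ext ?_ ?_⟩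
  · exact plusPos_univ_eq_left ⟨hX₁, hY₁⟩ Set.inter_subset_left
  · exact Set.inter_eq_left.2 (subset_plusPos_left J hY₂)
  · exact Set.inter_eq_left.2 (subset_plusPos_left J hY₁)
  · exact plusPos_univ_eq_left ⟨hX₂, hY₂⟩ Set.inter_subset_left
end

section
/- If X and Y are double suits in an IFG power set algebra, then X ·_J ∼X ≤ Y +_K ∼Y, where ≤ means the first components are included (⁺ direction) and the second components of the right-hand side are included in those of the left (⁻ direction). -/
/-- A suit: a nonempty collection of teams closed under subsets. -/
def IsSuit {ι A : Type*} (S : Set (Set (ι → A))) : Prop :=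
  S.Nonempty ∧ ∀ V ∈ S, ∀ V' ⊆ V, V' ∈ S

/-- A pair of suits. -/
def IsPairOfSuits {ι A : Type*} (X : IFGElem ι A) : Prop :=
  IsSuit X.1 ∧ IsSuit X.2

/-- A double suit: a pair of suits with `X⁺ ∩ X⁻ = {∅}`. -/
def IsDoubleSuit {ι A : Type*} (X : IFGElem ι A) : Prop :=
  IsPairOfSuits X ∧ X.1 ∩ X.2 = {∅}

lemma empty_mem_suit {ι A : Type*} {S : Set (Set (ι → A))} (h : IsSuit S) : ∅ ∈ S := by
  obtain ⟨⟨V, hV⟩, hd⟩ := h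
  exact hd V hV ∅ (Set.empty_subset V)

lemma empty_mem_plusPos {ι A : Type*} (J : Set ι) {S T : Set (Set (ι → A))}
    (hS : ∅ ∈ S) (hT : ∅ ∈ T) : (∅ : Set (ι → A)) ∈ plusPos J S T :=
  ⟨∅, hS, ∅, hT, by simp, by simp, fun a ha => absurd ha (by simp)⟩

/-- The Kleene inequality: for double suits `X` and `Y`,
`X ·_J ∼X ≤ Y +_K ∼Y` (i.e. `⁺`-components are included one way and
`⁻`-components the other way). -/
theorem kleene_ineq {ι A : Type*} (J K : Set ι) (X Y : IFGElem ι A)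
    (hX : IsDoubleSuit X) (hY : IsDoubleSuit Y) :
    (ifgTimes J X (ifgNeg X)).1 ⊆ (ifgPlus K Y (ifgNeg Y)).1 ∧
    (ifgPlus K Y (ifgNeg Y)).2 ⊆ (ifgTimes J X (ifgNeg X)).2 := by
  constructor
  · intro V hV
    have : V = ∅ := by
      have := hX.2
      simp only [ifgTimes, ifgNeg] at hV
      have hmem : V ∈ X.1 ∩ X.2 := hV
      rw [this] at hmem
      exact hmem
    subst this
    exact empty_mem_plusPos K (empty_mem_suit hY.1.1) (empty_mem_suit hY.1.2)
  · intro V hV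
    have : V = ∅ := by
      have := hY.2
      simp only [ifgPlus, ifgNeg] at hV
      have hmem : V ∈ Y.1 ∩ Y.2 := ⟨hV.2, hV.1⟩
      rw [this] at hmem
      exact hmem
    subst this
    exact empty_mem_plusPos J (empty_mem_suit hX.1.2) (empty_mem_suit hX.1.1)
end

section
/- For i ∉ J (or j ∉ J) and k distinct from i and j, the cylindric axiom C6 holds in IFG power set algebras: C_{k,J}(D_{ik} ·_∅ D_{kj}) = D_{ij}. -/
/-! Write `Δ_{ij} = {a | a i = a j}`, so `D_{ij} = ⟨𝒫 Δ_{ij}, 𝒫 Δ_{ij}ᶜ⟩`. Since `∪_∅` is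
plain disjoint union, `D_{ik} ·_∅ D_{kj} = ⟨𝒫 (Δ_{ik} ∩ Δ_{kj}), 𝒫 (Δ_{ik} ∩ Δ_{kj})ᶜ⟩`, and
`a(k:c)` lies in `Δ_{ik} ∩ Δ_{kj}` iff `a i = c = a j`. This gives the negative part at once; for the positive
part the witness is `f = (· i)`, which is independent of `J` on a subteam of `Δ_{ij}` as soon as
`i ∉ J` or `j ∉ J`. -/

section

variable {ι A : Type*}

def coordDiag (i j : ι) : Set (ι → A) := {a | a i = a j}

theorem ifgD_eq_powerset (i j : ι) :
    (ifgD i j : IFGElem ι A) = (𝒫 coordDiag i j, 𝒫 (coordDiag i j)ᶜ) :=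
  rfl

theorem plusPos_empty_powerset (P Q : Set (ι → A)) :
    plusPos ∅ (𝒫 P) (𝒫 Q) = 𝒫 (P ∪ Q) := by
  ext V
  constructor
  · rintro ⟨V₁, hV₁, V₂, hV₂, rfl, -, -⟩
    exact Set.union_subset_union hV₁ hV₂
  · intro hV
    refine ⟨V ∩ P, Set.inter_subset_right, V \ P, ?_, Set.inter_union_sdiff V P,
      Set.disjoint_sdiff_inter.symm, fun a _ b _ hab => ?_⟩
    · intro a ⟨haV, haP⟩
      exact (hV haV).resolve_left haP
    · obtain rfl : a = b := funext fun x => hab x (Set.notMem_empty x)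
      exact ⟨id, id⟩

theorem ifgTimes_empty_powerset (P P' Q Q' : Set (ι → A)) :
    ifgTimes ∅ (𝒫 P, 𝒫 P') (𝒫 Q, 𝒫 Q') = (𝒫 (P ∩ Q), 𝒫 (P' ∪ Q')) := by
  rw [ifgTimes, plusPos_empty_powerset, Set.powerset_inter]

theorem indepOf_eval {J : Set ι} {i : ι} (hi : i ∉ J) (V : Set (ι → A)) :
    IndepOf J V (fun a => a i) :=
  fun _ _ _ _ hab => hab i hi

theorem IndepOf.congr {J : Set ι} {V : Set (ι → A)} {f g : (ι → A) → A}
    (hg : IndepOf J V g) (hfg : ∀ a ∈ V, f a = g a) : IndepOf J V f := by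
  intro a ha b hb hab
  rw [hfg a ha, hfg b hb]
  exact hg a ha b hb hab

theorem exists_indepOf_between_iff_subset_coordDiag {J : Set ι} {i j : ι}
    (hJ : i ∉ J ∨ j ∉ J) (V : Set (ι → A)) :
    (∃ f, IndepOf J V f ∧ ∀ a ∈ V, a i = f a ∧ f a = a j) ↔ V ⊆ coordDiag i j := by
  constructor
  · rintro ⟨f, -, hf⟩ a ha
    exact (hf a ha).1.trans (hf a ha).2
  · intro hV
    refine ⟨fun a => a i, ?_, fun a ha => ⟨rfl, hV ha⟩⟩
    rcases hJ with hi | hj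
    · exact indepOf_eval hi V
    · exact (indepOf_eval hj V).congr fun a ha => hV ha

variable [DecidableEq ι]

theorem update_mem_coordDiag_inter_iff {i j k : ι} (hik : i ≠ k) (hkj : k ≠ j)
    (a : ι → A) (c : A) :
    Function.update a k c ∈ coordDiag i k ∩ coordDiag k j ↔ a i = c ∧ c = a j := by
  simp only [coordDiag, Set.mem_inter_iff, Set.mem_ofPred_eq, Function.update_self,
    Function.update_of_ne hik, Function.update_of_ne hkj.symm]

theorem teamUpd_subset_iff (n : ι) (f : (ι → A) → A) (V S : Set (ι → A)) :
    teamUpd n f V ⊆ S ↔ ∀ a ∈ V, Function.update a n (f a) ∈ S :=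
  Set.image_subset_iff

theorem teamExp_subset_iff (n : ι) (W S : Set (ι → A)) :
    teamExp n W ⊆ S ↔ ∀ a ∈ W, ∀ c, Function.update a n c ∈ S := by
  constructor
  · intro h a ha c
    exact h ⟨a, ha, c, rfl⟩
  · rintro h _ ⟨a, ha, c, rfl⟩
    exact h a ha c

theorem teamExp_subset_compl_coordDiag_inter_iff {i j k : ι} (hik : i ≠ k) (hkj : k ≠ j)
    (W : Set (ι → A)) :
    teamExp k W ⊆ (coordDiag i k ∩ coordDiag k j)ᶜ ↔ W ⊆ (coordDiag i j)ᶜ := by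
  simp only [teamExp_subset_iff, Set.mem_compl_iff, update_mem_coordDiag_inter_iff hik hkj]
  exact forall₂_congr fun a _ =>
    ⟨fun h hij => h (a i) ⟨rfl, hij⟩, fun h c hc => h (hc.1.trans hc.2)⟩

end

/-- Cylindric axiom C6 for IFG power set algebras: if `i ∉ J` or `j ∉ J`, and
`k` is distinct from `i` and `j`, then `C_{k,J}(D_{ik} ·_∅ D_{kj}) = D_{ij}`. -/
theorem cyl_diag_diag {ι A : Type*} [DecidableEq ι] (J : Set ι) (i j k : ι)
    (hJ : i ∉ J ∨ j ∉ J) (hik : i ≠ k) (hkj : k ≠ j) :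
    ifgCyl k J (ifgTimes (∅ : Set ι) (ifgD i k) (ifgD k j)) = (ifgD i j : IFGElem ι A) := by
  rw [ifgD_eq_powerset, ifgD_eq_powerset, ifgD_eq_powerset, ifgTimes_empty_powerset,
    ← Set.compl_inter]
  ext V
  · simp only [ifgCyl, Set.mem_ofPred_eq, Set.mem_powerset_iff, teamUpd_subset_iff,
      update_mem_coordDiag_inter_iff hik hkj]
    exact exists_indepOf_between_iff_subset_coordDiag hJ V
  · exact teamExp_subset_compl_coordDiag_inter_iff hik hkj V
end

section
/- Every subdirectly irreducible Kleene algebra is isomorphic to the two-element Boolean/De Morgan algebra B or the three-element Kleene algebra K with one fixed point; consequently, every centered Kleene algebra (one possessing an element a with ∼a = a) has a unique fixed point. -/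
/-- A De Morgan algebra: a bounded distributive lattice with an involution `∼`
satisfying `∼∼x = x` and `∼(x ⊔ y) = ∼x ⊓ ∼y`. -/
class DeMorganAlg (α : Type*) extends DistribLattice α, BoundedOrder α where
  dneg : α → α
  dneg_dneg : ∀ x : α, dneg (dneg x) = x
  dneg_sup : ∀ x y : α, dneg (x ⊔ y) = dneg x ⊓ dneg y

/-- A Kleene algebra: a De Morgan algebra satisfying `x ⊓ ∼x ≤ y ⊔ ∼y`. -/
class KleeneAlg (α : Type*) extends DeMorganAlg α where
  kleene : ∀ x y : α, x ⊓ dneg x ≤ y ⊔ dneg y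

open DeMorganAlg

/-- The two-element Boolean/De Morgan algebra `B`. -/
instance : KleeneAlg Bool where
  dneg := not
  dneg_dneg := by decide
  dneg_sup := by decide
  kleene := by decide

/-- The three-element Kleene algebra `K` with one fixed point. -/
noncomputable instance : KleeneAlg (Fin 3) where
  dneg x := 2 - x
  dneg_dneg := by decide
  dneg_sup := by decide
  kleene := by decide

/-- An isomorphism of Kleene algebras. -/
structure KleeneIso (α β : Type*) [KleeneAlg α] [KleeneAlg β] extends α ≃ β where
  map_sup : ∀ a b : α, toFun (a ⊔ b) = toFun a ⊔ toFun b
  map_inf : ∀ a b : α, toFun (a ⊓ b) = toFun a ⊓ toFun b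
  map_dneg : ∀ a : α, toFun (dneg a) = dneg (toFun a)

/-- A congruence on a Kleene algebra: an equivalence relation compatible with
`⊔`, `⊓`, and `∼`. -/
def IsKleeneCong {α : Type*} [KleeneAlg α] (r : α → α → Prop) : Prop :=
  Equivalence r ∧
  (∀ a b c d : α, r a b → r c d → r (a ⊔ c) (b ⊔ d)) ∧
  (∀ a b c d : α, r a b → r c d → r (a ⊓ c) (b ⊓ d)) ∧
  (∀ a b : α, r a b → r (dneg a) (dneg b))

/-- A Kleene algebra is subdirectly irreducible iff it has a least nontrivial
congruence, i.e. some pair of distinct elements is identified by every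
nontrivial congruence. -/
def SubdirectlyIrreducibleKleene (α : Type*) [KleeneAlg α] : Prop :=
  ∃ a b : α, a ≠ b ∧ ∀ r : α → α → Prop, IsKleeneCong r →
    (∃ x y : α, x ≠ y ∧ r x y) → r a b


section KleeneAux

variable {α : Type*} [KleeneAlg α]

theorem kdneg_inf (x y : α) : dneg (x ⊓ y) = dneg x ⊔ dneg y := by
  conv_lhs => rw [← dneg_dneg x, ← dneg_dneg y, ← dneg_sup]
  rw [dneg_dneg]

theorem kdneg_le {x y : α} (h : x ≤ y) : dneg y ≤ dneg x := by
  have h2 := dneg_sup x y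
  rw [sup_eq_right.mpr h] at h2
  rw [h2]; exact inf_le_left

theorem kdneg_inj {x y : α} (h : dneg x = dneg y) : x = y := by
  rw [← dneg_dneg x, h, dneg_dneg]

theorem kdneg_top : dneg (⊤ : α) = ⊥ := by
  apply le_antisymm _ bot_le
  have h := kdneg_le (le_top (a := dneg (⊥ : α)))
  rwa [dneg_dneg] at h

theorem kdneg_bot : dneg (⊥ : α) = ⊤ := by
  apply kdneg_inj; rw [dneg_dneg, kdneg_top]

theorem kfixed_unique (a b : α) (ha : dneg a = a) (hb : dneg b = b) : a = b := by
  have h1 := KleeneAlg.kleene a b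
  have h2 := KleeneAlg.kleene b a
  rw [ha, hb, inf_idem, sup_idem] at h1 h2
  exact le_antisymm h1 h2

/-- The relation `x ⊔ c = y ⊔ c ∧ x ⊓ ∼c = y ⊓ ∼c` is a Kleene congruence. -/
theorem kcong_r (c : α) :
    IsKleeneCong (fun x y : α => x ⊔ c = y ⊔ c ∧ x ⊓ dneg c = y ⊓ dneg c) := by
  refine ⟨⟨fun x => ⟨rfl, rfl⟩, fun h => ⟨h.1.symm, h.2.symm⟩,
    fun h h' => ⟨h.1.trans h'.1, h.2.trans h'.2⟩⟩, ?_, ?_, ?_⟩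
  · rintro p q u v ⟨h1, h2⟩ ⟨h3, h4⟩
    constructor
    · rw [← sup_idem (a := c), sup_sup_sup_comm, h1, h3, ← sup_sup_sup_comm, sup_idem]
    · rw [inf_sup_right, h2, h4, ← inf_sup_right]
  · rintro p q u v ⟨h1, h2⟩ ⟨h3, h4⟩
    constructor
    · rw [sup_inf_right, h1, h3, ← sup_inf_right]
    · rw [← inf_idem (a := dneg c), inf_inf_inf_comm, h2, h4, ← inf_inf_inf_comm, inf_idem]
  · rintro p q ⟨h1, h2⟩
    constructor
    · have := congrArg dneg h2
      rwa [kdneg_inf, kdneg_inf, dneg_dneg] at this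
    · have := congrArg dneg h1
      rwa [dneg_sup, dneg_sup] at this

/-- For `c ≤ ∼c`, the kernel of `x ↦ (x ⊔ c) ⊓ ∼c` is a Kleene congruence. -/
theorem kcong_m (c : α) (hc : c ≤ dneg c) :
    IsKleeneCong (fun x y : α => (x ⊔ c) ⊓ dneg c = (y ⊔ c) ⊓ dneg c) := by
  have key : ∀ z : α, (z ⊔ c) ⊓ dneg c = (z ⊓ dneg c) ⊔ c := by
    intro z
    rw [inf_sup_right, inf_eq_left.mpr hc]
  have hsup : ∀ x y : α, ((x ⊔ y) ⊔ c) ⊓ dneg c = ((x ⊔ c) ⊓ dneg c) ⊔ ((y ⊔ c) ⊓ dneg c) := by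
    intro x y
    rw [key, key, key, inf_sup_right, sup_sup_sup_comm, sup_idem]
  have hinf : ∀ x y : α, ((x ⊓ y) ⊔ c) ⊓ dneg c = ((x ⊔ c) ⊓ dneg c) ⊓ ((y ⊔ c) ⊓ dneg c) := by
    intro x y
    rw [key, key, key, ← sup_inf_right, inf_inf_inf_comm, inf_idem]
  refine ⟨⟨fun x => rfl, fun h => h.symm, fun h h' => h.trans h'⟩, ?_, ?_, ?_⟩
  · intro p q u v h1 h2
    rw [hsup, hsup, h1, h2]
  · intro p q u v h1 h2
    rw [hinf, hinf, h1, h2]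
  · intro p q h1
    have h2 := congrArg dneg h1
    rw [kdneg_inf, kdneg_inf, dneg_sup, dneg_sup, dneg_dneg, ← key, ← key] at h2
    exact h2

theorem kclassify (hSI : SubdirectlyIrreducibleKleene α) :
    ∀ c : α, c = ⊥ ∨ c = ⊤ ∨ dneg c = c := by
  obtain ⟨a, b, hab, hmin⟩ := hSI
  have keyP : ∀ c : α, c ≤ dneg c ∨ (a ⊔ c = b ⊔ c ∧ a ⊓ dneg c = b ⊓ dneg c) := by
    intro c
    by_cases h : c ≤ dneg c
    · exact Or.inl h
    · refine Or.inr (hmin _ (kcong_r c) ⟨c ⊓ dneg c, c, ?_, ?_, ?_⟩)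
      · exact fun he => h (inf_eq_left.mp he)
      · rw [sup_eq_right.mpr inf_le_left, sup_idem]
      · rw [inf_assoc, inf_idem]
  have low : ∀ c : α, c ≤ dneg c → c ≠ dneg c → c = ⊥ := by
    intro c hle hne
    by_contra hcbot
    have hQ : a ⊔ dneg c = b ⊔ dneg c ∧ a ⊓ c = b ⊓ c := by
      rcases keyP (dneg c) with h | h
      · rw [dneg_dneg] at h
        exact absurd (le_antisymm hle h) hne
      · rwa [dneg_dneg] at h
    have hM : (a ⊔ c) ⊓ dneg c = (b ⊔ c) ⊓ dneg c := by
      refine hmin _ (kcong_m c hle) ⟨⊥, c, fun h => hcbot h.symm, ?_⟩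
      rw [bot_sup_eq, sup_idem]
    have h1 : (a ⊔ c) ⊔ dneg c = (b ⊔ c) ⊔ dneg c := by
      rw [sup_assoc, sup_assoc, sup_eq_right.mpr hle, hQ.1]
    have h2 : a ⊔ c = b ⊔ c := eq_of_inf_eq_sup_eq hM h1
    exact hab (eq_of_inf_eq_sup_eq hQ.2 h2)
  intro c
  rcases keyP c with h1 | hP
  · by_cases he : c = dneg c
    · exact Or.inr (Or.inr he.symm)
    · exact Or.inl (low c h1 he)
  · rcases keyP (dneg c) with h2 | hQ
    · rw [dneg_dneg] at h2
      by_cases he : dneg c = c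
      · exact Or.inr (Or.inr he)
      · refine Or.inr (Or.inl ?_)
        have hb := low (dneg c) (by rwa [dneg_dneg]) (by rwa [dneg_dneg])
        have := congrArg dneg hb
        rwa [dneg_dneg, kdneg_bot] at this
    · rw [dneg_dneg] at hQ
      exact absurd (eq_of_inf_eq_sup_eq hQ.2 hP.1) hab

end KleeneAux

/-- Every subdirectly irreducible Kleene algebra is isomorphic to `B` or `K`;
consequently any two fixed points of a Kleene algebra coincide (so a centered
Kleene algebra has a unique fixed point). -/
theorem kleene_si_classification_and_unique_center (α : Type*) [KleeneAlg α] :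
    (SubdirectlyIrreducibleKleene α →
      Nonempty (KleeneIso α Bool) ∨ Nonempty (KleeneIso α (Fin 3))) ∧
    (∀ a b : α, dneg a = a → dneg b = b → a = b) := by
  classical
  constructor
  · intro hSI
    have hcl := kclassify hSI
    obtain ⟨a, b, hab, -⟩ := hSI
    have hbt : (⊥ : α) ≠ ⊤ := by
      intro h
      exact hab (le_antisymm ((le_top : a ≤ ⊤).trans (h.ge.trans bot_le))
        ((le_top : b ≤ ⊤).trans (h.ge.trans bot_le)))
    have htb : (⊤ : α) ≠ ⊥ := fun h => hbt h.symm
    by_cases hfix : ∃ e : α, dneg e = e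
    · obtain ⟨e, he⟩ := hfix
      have heb : e ≠ ⊥ := by
        intro h
        rw [h, kdneg_bot] at he
        exact htb he
      have hbe : (⊥ : α) ≠ e := fun h => heb h.symm
      have het : e ≠ ⊤ := by
        intro h
        rw [h, kdneg_top] at he
        exact hbt he
      have hte : (⊤ : α) ≠ e := fun h => het h.symm
      have hcl3 : ∀ c : α, c = ⊥ ∨ c = ⊤ ∨ c = e := by
        intro c
        rcases hcl c with h | h | h
        · exact Or.inl h
        · exact Or.inr (Or.inl h)
        · exact Or.inr (Or.inr (kfixed_unique c e h he))
      refine Or.inr ⟨⟨⟨fun c => if c = ⊥ then 0 else if c = ⊤ then 2 else 1,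
        fun n => if n = 0 then ⊥ else if n = 2 then ⊤ else e, ?_, ?_⟩, ?_, ?_, ?_⟩⟩
      · intro c
        rcases hcl3 c with h | h | h <;> subst h <;> simp [hbt, htb, heb, het]
      · intro n
        fin_cases n <;> simp [hbt, htb, heb, het, hbe, hte]
      · intro x y
        rcases hcl3 x with h | h | h <;> subst h <;>
          rcases hcl3 y with h | h | h <;> subst h <;>
          simp [hbt, htb, heb, het, hbe, hte]
      · intro x y
        rcases hcl3 x with h | h | h <;> subst h <;>
          rcases hcl3 y with h | h | h <;> subst h <;>
          simp [hbt, htb, heb, het, hbe, hte]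
      · intro x
        rcases hcl3 x with h | h | h <;> subst h <;>
          simp [hbt, htb, heb, het, hbe, hte, kdneg_bot, kdneg_top, he] <;> decide
    · have hcl2 : ∀ c : α, c = ⊥ ∨ c = ⊤ := by
        intro c
        rcases hcl c with h | h | h
        · exact Or.inl h
        · exact Or.inr h
        · exact absurd ⟨c, h⟩ hfix
      refine Or.inl ⟨⟨⟨fun c => if c = ⊤ then true else false,
        fun b => cond b ⊤ ⊥, ?_, ?_⟩, ?_, ?_, ?_⟩⟩
      · intro c
        rcases hcl2 c with h | h <;> subst h <;> simp [hbt, htb]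
      · intro b
        cases b <;> simp [hbt, htb]
      · intro x y
        rcases hcl2 x with h | h <;> subst h <;>
          rcases hcl2 y with h | h <;> subst h <;>
          simp [hbt, htb]
      · intro x y
        rcases hcl2 x with h | h <;> subst h <;>
          rcases hcl2 y with h | h <;> subst h <;>
          simp [hbt, htb]
      · intro x
        rcases hcl2 x with h | h <;> subst h <;>
          simp [hbt, htb, kdneg_bot, kdneg_top] <;> decide
  · exact fun a b => kfixed_unique a b
end
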